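/- If a QBF φ = Π.ψ in prenex conjunctive normal form is satisfiable under an assignment A (i.e., φ[A] is satisfiable as a QBF), and A is a QCDCL assignment (decisions assigned in prefix order, other literals forced by unit/pure literal detection), then adding the cube C = ⋀_{l∈A} l disjunctively to the matrix preserves satisfiability: Π.ψ is satisfiable if and only if Π.(ψ ∨ C) is satisfiable. -/

import Mathlib

/-- Variables are natural numbers. -/
abbrev Var := ℕ

/-- A literal is a variable together with a polarity. -/
abbrev Lit := Var × Bool

/-- Negation of a literal. -/
def Lit.negate (l : Lit) : Lit := (l.1, !l.2)

/-- A clause is a finite set of literals (interpreted disjunctively). -/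
abbrev Clause := Finset Lit

/-- A cube is a finite set of literals (interpreted conjunctively). -/
abbrev Cube := Finset Lit

/-- A CNF is a finite set of clauses. -/
abbrev Cnf := Finset Clause

/-- An assignment is a finite set of literals. -/
abbrev Assignment := Finset Lit

/-- An assignment contains no complementary pair of literals. -/
def Assignment.consistent (A : Assignment) : Prop := ∀ l ∈ A, Lit.negate l ∉ A

/-- A total assignment satisfies a literal. -/
def litSat (σ : Var → Bool) (l : Lit) : Prop := σ l.1 = l.2

/-- A total assignment satisfies a clause. -/
def clauseSat (σ : Var → Bool) (C : Clause) : Prop := ∃ l ∈ C, litSat σ l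

/-- A total assignment satisfies a CNF (is a propositional model). -/
def cnfSat (σ : Var → Bool) (ψ : Cnf) : Prop := ∀ C ∈ ψ, clauseSat σ C

/-- A total assignment satisfies a cube. -/
def cubeSat (σ : Var → Bool) (D : Cube) : Prop := ∀ l ∈ D, litSat σ l

/-- Restriction of a clause by an assignment: delete falsified literals. -/
def Clause.restrict (C : Clause) (A : Assignment) : Clause :=
  C.filter (fun l => Lit.negate l ∉ A)

/-- Restriction ψ[A] of a CNF by an assignment: remove satisfied clauses and
delete falsified literals from the remaining clauses. -/
def Cnf.restrict (ψ : Cnf) (A : Assignment) : Cnf :=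
  (ψ.filter (fun C => ∀ l ∈ A, l ∉ C)).image (fun C => Clause.restrict C A)

/-- Quantifiers. -/
inductive Quant | ex | all
deriving DecidableEq

/-- A quantifier prefix: a list of quantified variables (outermost first). -/
abbrev QPrefix := List (Quant × Var)

/-- Restriction of a prefix by an assignment: remove assigned variables. -/
def QPrefix.restrict (pre : QPrefix) (A : Assignment) : QPrefix :=
  pre.filter (fun q => q.2 ∉ A.image Prod.fst)

/-- Satisfiability of the PCNF `pre.ψ`, defined recursively over the prefix:
an existential variable needs one satisfiable branch, a universal variable
both; a quantifier-free CNF is satisfiable iff it is propositionally true. -/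
def qbfSat : QPrefix → Cnf → Prop
  | [], ψ => ∃ σ : Var → Bool, cnfSat σ ψ
  | (Quant.ex, x) :: pre, ψ =>
      qbfSat pre (Cnf.restrict ψ {(x, true)}) ∨ qbfSat pre (Cnf.restrict ψ {(x, false)})
  | (Quant.all, x) :: pre, ψ =>
      qbfSat pre (Cnf.restrict ψ {(x, true)}) ∧ qbfSat pre (Cnf.restrict ψ {(x, false)})

/-- Restriction of a set of cubes (disjunctively added to the matrix) by an
assignment: remove falsified cubes and delete satisfied literals. -/
def Cube.restrictSet (Ds : Finset Cube) (A : Assignment) : Finset Cube :=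
  (Ds.filter (fun D => ∀ l ∈ D, Lit.negate l ∉ A)).image (fun D => D.filter (fun l => l ∉ A))

/-- Satisfiability of the QBF `pre.(ψ ∨ D₁ ∨ … ∨ Dₙ)` whose matrix is a CNF
together with disjunctively added cubes. -/
def qbfSatCubes : QPrefix → Cnf → Finset Cube → Prop
  | [], ψ, Ds => ∃ σ : Var → Bool, cnfSat σ ψ ∨ ∃ D ∈ Ds, cubeSat σ D
  | (Quant.ex, x) :: pre, ψ, Ds =>
      qbfSatCubes pre (Cnf.restrict ψ {(x, true)}) (Cube.restrictSet Ds {(x, true)}) ∨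
      qbfSatCubes pre (Cnf.restrict ψ {(x, false)}) (Cube.restrictSet Ds {(x, false)})
  | (Quant.all, x) :: pre, ψ, Ds =>
      qbfSatCubes pre (Cnf.restrict ψ {(x, true)}) (Cube.restrictSet Ds {(x, true)}) ∧
      qbfSatCubes pre (Cnf.restrict ψ {(x, false)}) (Cube.restrictSet Ds {(x, false)})

/-- Literal `l` is unit in the PCNF: the clause `(l)` occurs in the matrix
and the variable of `l` is existential. -/
def isUnit (pre : QPrefix) (ψ : Cnf) (l : Lit) : Prop :=
  ({l} : Clause) ∈ ψ ∧ (Quant.ex, l.1) ∈ pre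

/-- Literal `l` occurs in the CNF. -/
def occurs (ψ : Cnf) (l : Lit) : Prop := ∃ C ∈ ψ, l ∈ C

/-- Literal `l` is pure: it occurs but its negation does not. -/
def isPure (ψ : Cnf) (l : Lit) : Prop := occurs ψ l ∧ ¬ occurs ψ (Lit.negate l)

/-- Literals obtained by iterated unit/pure literal detection (QBCP), starting
from the decision assignment `A0`.  A pure existential literal is assigned
positively, a pure universal literal negatively; a unit existential literal is
assigned positively. -/
inductive PropChain (pre : QPrefix) (ψ : Cnf) (A0 : Assignment) : List Lit → Prop
  | nil : PropChain pre ψ A0 []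
  | unit {ls : List Lit} {l : Lit} (h : PropChain pre ψ A0 ls)
      (hu : isUnit pre (Cnf.restrict ψ (A0 ∪ ls.toFinset)) l) :
      PropChain pre ψ A0 (l :: ls)
  | pureEx {ls : List Lit} {l : Lit} (h : PropChain pre ψ A0 ls)
      (hp : isPure (Cnf.restrict ψ (A0 ∪ ls.toFinset)) l)
      (he : (Quant.ex, l.1) ∈ pre) :
      PropChain pre ψ A0 (l :: ls)
  | pureAll {ls : List Lit} {l : Lit} (h : PropChain pre ψ A0 ls)
      (hp : isPure (Cnf.restrict ψ (A0 ∪ ls.toFinset)) l)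
      (ha : (Quant.all, l.1) ∈ pre) :
      PropChain pre ψ A0 (Lit.negate l :: ls)

/-- A QCDCL assignment: a consistent assignment `A = A' ∪ A''` where the
decision literals `A'` assign exactly the variables of an initial segment of
the prefix and `A''` is obtained by unit/pure literal detection (QBCP). -/
def QCDCLAssignment (pre : QPrefix) (ψ : Cnf) (A : Assignment) : Prop :=
  Assignment.consistent A ∧
  ∃ (A0 : Assignment) (ls : List Lit) (k : ℕ),
    A = A0 ∪ ls.toFinset ∧
    A0.image Prod.fst = ((pre.take k).map Prod.snd).toFinset ∧
    PropChain pre ψ A0 ls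

/-!
Adding a cube only weakens the matrix, so one direction is monotonicity. For the converse, call
a cube `E` redundant for `Π.ψ` when `Π.(ψ ∨ E)` satisfiable implies `Π.ψ` satisfiable, and strip
the literals of `A` off one at a time in the order QCDCL assigned them: decisions from the outermost
quantifier inwards, then propagated literals, oldest first. For a decision `a` on the outermost
variable, the branch `¬a` falsifies the cube, so only the branch `a` needs the smaller cube. For a
unit or pure literal `b`, assigning `b` preserves satisfiability both of `ψ` and of `ψ ∨ E` (any
cube containing `b` dies in the branch `¬b`), and the syntactic reason for this survives
assignments to other variables, so it also holds deep inside the prefix. Once all of `A` is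
stripped, what is left is `φ[A]`, which is satisfiable by hypothesis, so every cube is redundant
there.
-/

namespace Lit

@[simp] lemma negate_negate (l : Lit) : l.negate.negate = l := by
  simp [Lit.negate]

@[simp] lemma negate_fst (l : Lit) : l.negate.1 = l.1 := rfl

@[simp] lemma negate_inj {l m : Lit} : l.negate = m.negate ↔ l = m := by
  constructor
  · intro h
    simpa using congrArg Lit.negate h
  · rintro rfl
    rfl

lemma negate_eq_iff {l m : Lit} : l.negate = m ↔ l = m.negate := by
  rw [← negate_inj, negate_negate]

lemma negate_ne_self (l : Lit) : l.negate ≠ l := by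
  simp [Lit.negate, Prod.ext_iff]

lemma eq_or_eq_negate_of_fst_eq {l m : Lit} (h : l.1 = m.1) : l = m ∨ l = m.negate := by
  obtain ⟨v, bl⟩ := l
  obtain ⟨w, bm⟩ := m
  cases bl <;> cases bm <;> simp_all [Lit.negate]

end Lit

lemma Assignment.consistent.mono {A B : Assignment} (h : A ⊆ B) (hB : B.consistent) :
    A.consistent :=
  fun l hl hneg => hB l (h hl) (h hneg)

lemma Clause.mem_restrict {C : Clause} {A : Assignment} {l : Lit} :
    l ∈ Clause.restrict C A ↔ l ∈ C ∧ l.negate ∉ A :=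
  Finset.mem_filter

lemma Clause.restrict_subset (C : Clause) (A : Assignment) : Clause.restrict C A ⊆ C :=
  Finset.filter_subset _ _

lemma Clause.restrict_restrict (C : Clause) (A B : Assignment) :
    Clause.restrict (Clause.restrict C B) A = Clause.restrict C (A ∪ B) := by
  ext l
  simp only [Clause.mem_restrict, Finset.mem_union]
  tauto

lemma Clause.restrict_eq_self {C : Clause} {A : Assignment} (h : ∀ l ∈ A, l.negate ∉ C) :
    Clause.restrict C A = C :=
  Finset.filter_true_of_mem fun l hl hlA => h _ hlA (by simpa using hl)

namespace Cnf

lemma mem_restrict {ψ : Cnf} {A : Assignment} {D : Clause} :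
    D ∈ Cnf.restrict ψ A ↔
      ∃ C ∈ ψ, (∀ l ∈ A, l ∉ C) ∧ Clause.restrict C A = D := by
  simp [Cnf.restrict, and_assoc]

lemma restrict_restrict {ψ : Cnf} {A B : Assignment} (h : ∀ l ∈ A, l.negate ∉ B) :
    Cnf.restrict (Cnf.restrict ψ B) A = Cnf.restrict ψ (A ∪ B) := by
  ext D
  simp only [mem_restrict]
  constructor
  · rintro ⟨_, ⟨C, hC, hCB, rfl⟩, hCA, rfl⟩
    refine ⟨C, hC, fun l hl hlC => ?_, (Clause.restrict_restrict C A B).symm⟩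
    rcases Finset.mem_union.1 hl with hlA | hlB
    · exact hCA l hlA (Clause.mem_restrict.2 ⟨hlC, h l hlA⟩)
    · exact hCB l hlB hlC
  · rintro ⟨C, hC, hCAB, rfl⟩
    exact ⟨_, ⟨C, hC, fun l hl => hCAB l (Finset.mem_union_right _ hl), rfl⟩,
      fun l hl hlC => hCAB l (Finset.mem_union_left _ hl) (Clause.restrict_subset _ _ hlC),
      Clause.restrict_restrict C A B⟩

lemma restrict_comm {ψ : Cnf} {b : Lit} {x : Var} (hx : b.1 ≠ x) (t : Bool) :
    Cnf.restrict (Cnf.restrict ψ {b}) {(x, t)} = Cnf.restrict (Cnf.restrict ψ {(x, t)}) {b} := by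
  rw [restrict_restrict, restrict_restrict, Finset.union_comm] <;>
    simp [Prod.ext_iff, hx, Ne.symm hx]

@[simp] lemma restrict_empty (ψ : Cnf) : Cnf.restrict ψ ∅ = ψ := by
  ext D
  simp [mem_restrict, Clause.restrict]

lemma restrict_mono {ψ₁ ψ₂ : Cnf} (h : ψ₁ ⊆ ψ₂) (A : Assignment) :
    Cnf.restrict ψ₁ A ⊆ Cnf.restrict ψ₂ A :=
  Finset.image_subset_image (Finset.filter_subset_filter _ h)

lemma empty_mem_restrict {ψ : Cnf} (h : (∅ : Clause) ∈ ψ) (A : Assignment) :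
    (∅ : Clause) ∈ Cnf.restrict ψ A :=
  mem_restrict.2 ⟨∅, h, by simp, by simp [Clause.restrict]⟩

lemma empty_mem_restrict_negate {ψ : Cnf} {b : Lit} (h : ({b} : Clause) ∈ ψ) :
    (∅ : Clause) ∈ Cnf.restrict ψ {b.negate} :=
  mem_restrict.2
    ⟨{b}, h, by simpa using Lit.negate_ne_self b, by ext; simp [Clause.mem_restrict]⟩

lemma singleton_mem_restrict {ψ : Cnf} {b : Lit} {x : Var} (h : ({b} : Clause) ∈ ψ)
    (hx : b.1 ≠ x) (t : Bool) : ({b} : Clause) ∈ Cnf.restrict ψ {(x, t)} := by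
  refine mem_restrict.2 ⟨{b}, h, ?_, Clause.restrict_eq_self ?_⟩ <;>
    simp [Prod.ext_iff, Ne.symm hx]

lemma restrict_negate_subset {ψ : Cnf} {b : Lit} (h : ¬ occurs ψ b) :
    Cnf.restrict ψ {b.negate} ⊆ Cnf.restrict ψ {b} := by
  intro D hD
  obtain ⟨C, hC, hnb, rfl⟩ := mem_restrict.1 hD
  have hbC : b ∉ C := fun hb => h ⟨C, hC, hb⟩
  have hnbC : b.negate ∉ C := by simpa using hnb
  rw [Clause.restrict_eq_self (by simpa using hbC)]
  exact mem_restrict.2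
    ⟨C, hC, by simpa using hbC, Clause.restrict_eq_self (by simpa using hnbC)⟩

end Cnf

lemma occurs_of_occurs_restrict {ψ : Cnf} {B : Assignment} {l : Lit}
    (h : occurs (Cnf.restrict ψ B) l) : occurs ψ l := by
  obtain ⟨D, hD, hl⟩ := h
  obtain ⟨C, hC, -, rfl⟩ := Cnf.mem_restrict.1 hD
  exact ⟨C, hC, Clause.restrict_subset _ _ hl⟩

lemma fst_ne_of_occurs_restrict {ψ : Cnf} {B : Assignment} {l a : Lit}
    (h : occurs (Cnf.restrict ψ B) l) (ha : a ∈ B) : a.1 ≠ l.1 := by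
  obtain ⟨D, hD, hl⟩ := h
  obtain ⟨C, hC, hBC, rfl⟩ := Cnf.mem_restrict.1 hD
  obtain ⟨hlC, hnl⟩ := Clause.mem_restrict.1 hl
  intro hal
  rcases Lit.eq_or_eq_negate_of_fst_eq hal with rfl | rfl
  · exact hBC a ha hlC
  · exact hnl ha

namespace QPrefix

lemma mem_restrict {pre : QPrefix} {A : Assignment} {q : Quant} {v : Var} (h : (q, v) ∈ pre)
    (hA : ∀ a ∈ A, a.1 ≠ v) : (q, v) ∈ QPrefix.restrict pre A :=
  List.mem_filter.2 ⟨h, by simpa using fun b hb => hA (v, b) hb rfl⟩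

lemma restrict_restrict (pre : QPrefix) (A B : Assignment) :
    QPrefix.restrict (QPrefix.restrict pre B) A = QPrefix.restrict pre (A ∪ B) := by
  simp only [QPrefix.restrict, List.filter_filter]
  exact List.filter_congr fun q _ => by simp [Finset.image_union]

@[simp] lemma restrict_empty (pre : QPrefix) : QPrefix.restrict pre ∅ = pre := by
  simp [QPrefix.restrict]

lemma nodup_restrict {pre : QPrefix} (h : (pre.map Prod.snd).Nodup) (A : Assignment) :
    ((QPrefix.restrict pre A).map Prod.snd).Nodup :=
  (List.filter_sublist.map Prod.snd).nodup h

lemma restrict_cons_self {q : Quant} {b : Lit} {pre : QPrefix}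
    (hnd : (((q, b.1) :: pre).map Prod.snd).Nodup) :
    QPrefix.restrict ((q, b.1) :: pre) {b} = pre := by
  rw [List.map_cons, List.nodup_cons] at hnd
  rw [QPrefix.restrict, List.filter_cons_of_neg (by simp), List.filter_eq_self]
  intro r hr
  simpa using fun h => hnd.1 (List.mem_map.2 ⟨r, hr, h⟩)

lemma restrict_cons_of_ne {q : Quant} {x : Var} {b : Lit} {pre : QPrefix} (hx : b.1 ≠ x) :
    QPrefix.restrict ((q, x) :: pre) {b} = (q, x) :: QPrefix.restrict pre {b} :=
  List.filter_cons_of_pos (by simpa using Ne.symm hx)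

lemma quant_eq_of_mem_cons {q q' : Quant} {x : Var} {pre : QPrefix}
    (hnd : (((q, x) :: pre).map Prod.snd).Nodup) (h : (q', x) ∈ (q, x) :: pre) : q' = q := by
  rw [List.map_cons, List.nodup_cons] at hnd
  rcases List.mem_cons.1 h with h | h
  · exact congrArg Prod.fst h
  · exact absurd (List.mem_map.2 ⟨_, h, rfl⟩) hnd.1

end QPrefix

namespace Cube

lemma mem_restrictSet {Ds : Finset Cube} {A : Assignment} {E : Cube} :
    E ∈ Cube.restrictSet Ds A ↔
      ∃ D ∈ Ds, (∀ l ∈ D, l.negate ∉ A) ∧ D.filter (· ∉ A) = E := by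
  simp [Cube.restrictSet, and_assoc]

lemma restrictSet_restrictSet {Ds : Finset Cube} {A B : Assignment}
    (h : ∀ l ∈ B, l.negate ∉ A) :
    Cube.restrictSet (Cube.restrictSet Ds B) A = Cube.restrictSet Ds (A ∪ B) := by
  ext E
  simp only [mem_restrictSet, Finset.mem_union, not_or]
  constructor
  · rintro ⟨_, ⟨D, hD, hDB, rfl⟩, hDA, rfl⟩
    refine ⟨D, hD, fun l hl => ⟨?_, hDB l hl⟩, by ext; simp only [Finset.mem_filter]; tauto⟩
    by_cases hlB : l ∈ B
    · exact h l hlB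
    · exact hDA l (Finset.mem_filter.2 ⟨hl, hlB⟩)
  · rintro ⟨D, hD, hDAB, rfl⟩
    exact ⟨_, ⟨D, hD, fun l hl => (hDAB l hl).2, rfl⟩,
      fun l hl => (hDAB l (Finset.mem_filter.1 hl).1).1,
      by ext; simp only [Finset.mem_filter]; tauto⟩

lemma restrictSet_comm {Ds : Finset Cube} {b : Lit} {x : Var} (hx : b.1 ≠ x) (t : Bool) :
    Cube.restrictSet (Cube.restrictSet Ds {b}) {(x, t)} =
      Cube.restrictSet (Cube.restrictSet Ds {(x, t)}) {b} := by
  rw [restrictSet_restrictSet, restrictSet_restrictSet, Finset.union_comm] <;>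
    simp [Prod.ext_iff, hx, Ne.symm hx]

@[simp] lemma restrictSet_emptyset (A : Assignment) : Cube.restrictSet ∅ A = ∅ := by
  simp [Cube.restrictSet]

lemma restrictSet_negate_eq_empty {Ds : Finset Cube} {b : Lit} (h : ∀ D ∈ Ds, b ∈ D) :
    Cube.restrictSet Ds {b.negate} = ∅ := by
  ext E
  simp only [mem_restrictSet, Finset.notMem_empty, iff_false]
  rintro ⟨D, hD, hDb, -⟩
  exact hDb b (h D hD) (Finset.mem_singleton_self _)

lemma restrictSet_singleton {E : Cube} {b : Lit} (h : b.negate ∉ E) :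
    Cube.restrictSet {E} {b} = {E.erase b} := by
  have hE : ∀ l ∈ E, l.negate ∉ ({b} : Assignment) := by
    rintro l hl hlb
    rw [Finset.mem_singleton, Lit.negate_eq_iff] at hlb
    exact h (hlb ▸ hl)
  rw [Cube.restrictSet, Finset.filter_singleton, if_pos hE, Finset.image_singleton]
  simp only [Finset.mem_singleton, Finset.filter_ne']

lemma mem_of_mem_restrictSet {Ds : Finset Cube} {b : Lit} {x : Var} (h : ∀ D ∈ Ds, b ∈ D)
    (hx : b.1 ≠ x) (t : Bool) : ∀ D ∈ Cube.restrictSet Ds {(x, t)}, b ∈ D := by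
  intro D' hD'
  obtain ⟨D, hD, -, rfl⟩ := mem_restrictSet.1 hD'
  simpa [Prod.ext_iff, hx] using h D hD

end Cube

def Quant.combine : Quant → Prop → Prop → Prop
  | .ex, p, r => p ∨ r
  | .all, p, r => p ∧ r

lemma Quant.combine_mono {p p' r r' : Prop} (q : Quant) (hp : p → p') (hr : r → r') :
    q.combine p r → q.combine p' r' := by
  cases q
  exacts [Or.imp hp hr, And.imp hp hr]

lemma Quant.combine_comm (q : Quant) (p r : Prop) : q.combine p r ↔ q.combine r p := by
  cases q
  exacts [or_comm, and_comm]

lemma qbfSat_cons (q : Quant) (x : Var) (pre : QPrefix) (ψ : Cnf) :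
    qbfSat ((q, x) :: pre) ψ ↔
      q.combine (qbfSat pre (Cnf.restrict ψ {(x, true)}))
        (qbfSat pre (Cnf.restrict ψ {(x, false)})) := by
  cases q <;> rfl

lemma qbfSatCubes_cons (q : Quant) (x : Var) (pre : QPrefix) (ψ : Cnf) (Ds : Finset Cube) :
    qbfSatCubes ((q, x) :: pre) ψ Ds ↔
      q.combine (qbfSatCubes pre (Cnf.restrict ψ {(x, true)}) (Cube.restrictSet Ds {(x, true)}))
        (qbfSatCubes pre (Cnf.restrict ψ {(x, false)}) (Cube.restrictSet Ds {(x, false)})) := by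
  cases q <;> rfl

lemma qbfSat_cons_lit (q : Quant) (b : Lit) (pre : QPrefix) (ψ : Cnf) :
    qbfSat ((q, b.1) :: pre) ψ ↔
      q.combine (qbfSat pre (Cnf.restrict ψ {b})) (qbfSat pre (Cnf.restrict ψ {b.negate})) := by
  obtain ⟨x, _ | _⟩ := b
  · rw [qbfSat_cons, Quant.combine_comm]
    rfl
  · rw [qbfSat_cons]
    rfl

lemma qbfSatCubes_cons_lit (q : Quant) (b : Lit) (pre : QPrefix) (ψ : Cnf) (Ds : Finset Cube) :
    qbfSatCubes ((q, b.1) :: pre) ψ Ds ↔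
      q.combine (qbfSatCubes pre (Cnf.restrict ψ {b}) (Cube.restrictSet Ds {b}))
        (qbfSatCubes pre (Cnf.restrict ψ {b.negate}) (Cube.restrictSet Ds {b.negate})) := by
  obtain ⟨x, _ | _⟩ := b
  · rw [qbfSatCubes_cons, Quant.combine_comm]
    rfl
  · rw [qbfSatCubes_cons]
    rfl

lemma qbfSatCubes_of_qbfSat : ∀ {pre : QPrefix} {ψ : Cnf} {Ds : Finset Cube},
    qbfSat pre ψ → qbfSatCubes pre ψ Ds
  | [], _, _, ⟨σ, hσ⟩ => ⟨σ, Or.inl hσ⟩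
  | (q, x) :: _, _, _, h => by
    rw [qbfSat_cons] at h
    rw [qbfSatCubes_cons]
    exact q.combine_mono qbfSatCubes_of_qbfSat qbfSatCubes_of_qbfSat h

@[simp] lemma qbfSatCubes_emptyset {pre : QPrefix} {ψ : Cnf} :
    qbfSatCubes pre ψ ∅ ↔ qbfSat pre ψ := by
  induction pre generalizing ψ with
  | nil => simp [qbfSat, qbfSatCubes]
  | cons head pre ih =>
    obtain ⟨q, x⟩ := head
    simp only [qbfSat_cons, qbfSatCubes_cons, Cube.restrictSet_emptyset, ih]

lemma qbfSat_of_subset : ∀ {pre : QPrefix} {ψ₁ ψ₂ : Cnf}, ψ₁ ⊆ ψ₂ →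
    qbfSat pre ψ₂ → qbfSat pre ψ₁
  | [], _, _, h, ⟨σ, hσ⟩ => ⟨σ, fun C hC => hσ C (h hC)⟩
  | (q, x) :: _, _, _, h, hs => by
    rw [qbfSat_cons] at hs ⊢
    exact q.combine_mono (qbfSat_of_subset (Cnf.restrict_mono h _))
      (qbfSat_of_subset (Cnf.restrict_mono h _)) hs

lemma not_qbfSat_of_empty_mem : ∀ {pre : QPrefix} {ψ : Cnf},
    (∅ : Clause) ∈ ψ → ¬ qbfSat pre ψ
  | [], _, h, ⟨σ, hσ⟩ => by simpa [clauseSat] using hσ ∅ h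
  | (q, x) :: _, _, h, hs => by
    rw [qbfSat_cons] at hs
    cases q
    exacts [hs.elim (not_qbfSat_of_empty_mem (Cnf.empty_mem_restrict h _))
      (not_qbfSat_of_empty_mem (Cnf.empty_mem_restrict h _)),
      not_qbfSat_of_empty_mem (Cnf.empty_mem_restrict h _) hs.1]

lemma qbfSat_restrict_of_unit_or_pure {pre : QPrefix} {ψ : Cnf} {b : Lit}
    (hb : ({b} : Clause) ∈ ψ ∨ ¬ occurs ψ b.negate)
    (h : qbfSat pre (Cnf.restrict ψ {b.negate})) : qbfSat pre (Cnf.restrict ψ {b}) := by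
  rcases hb with hunit | hpure
  · exact absurd h (not_qbfSat_of_empty_mem (Cnf.empty_mem_restrict_negate hunit))
  · exact qbfSat_of_subset (by simpa using Cnf.restrict_negate_subset hpure) h

def Forced (pre : QPrefix) (ψ : Cnf) (b : Lit) : Prop :=
  isUnit pre ψ b ∨ (isPure ψ b ∧ (Quant.ex, b.1) ∈ pre) ∨
    (isPure ψ b.negate ∧ (Quant.all, b.1) ∈ pre)

/-- The part of `Forced` that makes assigning `b` sound; unlike `Forced`, it survives
assignments to the other variables. -/
def WeaklyForced (pre : QPrefix) (ψ : Cnf) (b : Lit) : Prop :=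
  ((Quant.ex, b.1) ∈ pre ∧ (({b} : Clause) ∈ ψ ∨ ¬ occurs ψ b.negate)) ∨
    ((Quant.all, b.1) ∈ pre ∧ ¬ occurs ψ b)

lemma Forced.occurs {pre : QPrefix} {ψ : Cnf} {b : Lit} (hb : Forced pre ψ b) :
    occurs ψ b ∨ occurs ψ b.negate := by
  rcases hb with ⟨hunit, -⟩ | ⟨⟨hocc, -⟩, -⟩ | ⟨⟨hocc, -⟩, -⟩
  · exact Or.inl ⟨{b}, hunit, Finset.mem_singleton_self b⟩
  · exact Or.inl hocc
  · exact Or.inr hocc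

lemma Forced.fst_ne {pre : QPrefix} {ψ : Cnf} {B : Assignment} {a b : Lit}
    (hb : Forced pre (Cnf.restrict ψ B) b) (ha : a ∈ B) : a.1 ≠ b.1 := by
  rcases hb.occurs with h | h
  · exact fst_ne_of_occurs_restrict h ha
  · simpa using fst_ne_of_occurs_restrict h ha

lemma Forced.weaklyForced_restrict {pre : QPrefix} {ψ : Cnf} {B : Assignment} {b : Lit}
    (hb : Forced pre (Cnf.restrict ψ B) b) :
    WeaklyForced (QPrefix.restrict pre B) (Cnf.restrict ψ B) b := by
  have hmem {q : Quant} (h : (q, b.1) ∈ pre) : (q, b.1) ∈ QPrefix.restrict pre B :=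
    QPrefix.mem_restrict h fun _ ha => hb.fst_ne ha
  rcases hb with ⟨hunit, hq⟩ | ⟨⟨-, hpure⟩, hq⟩ | ⟨⟨-, hpure⟩, hq⟩
  · exact Or.inl ⟨hmem hq, Or.inl hunit⟩
  · exact Or.inl ⟨hmem hq, Or.inr hpure⟩
  · exact Or.inr ⟨hmem hq, by simpa using hpure⟩

lemma WeaklyForced.restrict {q : Quant} {x : Var} {pre : QPrefix} {ψ : Cnf} {b : Lit}
    (hb : WeaklyForced ((q, x) :: pre) ψ b) (hx : b.1 ≠ x) (t : Bool) :
    WeaklyForced pre (Cnf.restrict ψ {(x, t)}) b := by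
  have hmem {q' : Quant} (h : (q', b.1) ∈ (q, x) :: pre) : (q', b.1) ∈ pre :=
    (List.mem_cons.1 h).resolve_left fun h => hx (congrArg Prod.snd h)
  rcases hb with ⟨hq, hunit | hpure⟩ | ⟨hq, hpure⟩
  · exact Or.inl ⟨hmem hq, Or.inl (Cnf.singleton_mem_restrict hunit hx t)⟩
  · exact Or.inl ⟨hmem hq, Or.inr fun h => hpure (occurs_of_occurs_restrict h)⟩
  · exact Or.inr ⟨hmem hq, fun h => hpure (occurs_of_occurs_restrict h)⟩

lemma WeaklyForced.not_nil {ψ : Cnf} {b : Lit} : ¬ WeaklyForced [] ψ b := by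
  rintro (⟨h, -⟩ | ⟨h, -⟩) <;> simp at h

lemma qbfSatCubes_restrict_of_weaklyForced_head {q : Quant} {pre : QPrefix} {ψ : Cnf}
    {Ds : Finset Cube} {b : Lit} (hnd : (((q, b.1) :: pre).map Prod.snd).Nodup)
    (hb : WeaklyForced ((q, b.1) :: pre) ψ b) (hDs : ∀ D ∈ Ds, b ∈ D)
    (h : qbfSatCubes ((q, b.1) :: pre) ψ Ds) :
    qbfSatCubes pre (Cnf.restrict ψ {b}) (Cube.restrictSet Ds {b}) := by
  rw [qbfSatCubes_cons_lit, Cube.restrictSet_negate_eq_empty hDs, qbfSatCubes_emptyset] at h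
  rcases hb with ⟨hq, hex⟩ | ⟨hq, -⟩
  · obtain rfl := QPrefix.quant_eq_of_mem_cons hnd hq
    exact h.elim id fun h => qbfSatCubes_of_qbfSat (qbfSat_restrict_of_unit_or_pure hex h)
  · obtain rfl := QPrefix.quant_eq_of_mem_cons hnd hq
    exact h.1

lemma qbfSatCubes_restrict_of_weaklyForced {b : Lit} {pre : QPrefix} {ψ : Cnf}
    {Ds : Finset Cube} (hnd : (pre.map Prod.snd).Nodup) (hb : WeaklyForced pre ψ b)
    (hDs : ∀ D ∈ Ds, b ∈ D) (h : qbfSatCubes pre ψ Ds) :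
    qbfSatCubes (QPrefix.restrict pre {b}) (Cnf.restrict ψ {b}) (Cube.restrictSet Ds {b}) := by
  induction pre generalizing ψ Ds with
  | nil => exact absurd hb WeaklyForced.not_nil
  | cons head pre ih =>
    obtain ⟨q, x⟩ := head
    by_cases hx : b.1 = x
    · subst hx
      rw [QPrefix.restrict_cons_self hnd]
      exact qbfSatCubes_restrict_of_weaklyForced_head hnd hb hDs h
    · have hndpre : (pre.map Prod.snd).Nodup := (List.nodup_cons.1 hnd).2
      rw [qbfSatCubes_cons] at h
      rw [QPrefix.restrict_cons_of_ne hx, qbfSatCubes_cons, Cnf.restrict_comm hx,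
        Cnf.restrict_comm hx, Cube.restrictSet_comm hx, Cube.restrictSet_comm hx]
      exact q.combine_mono
        (ih hndpre (hb.restrict hx true) (Cube.mem_of_mem_restrictSet hDs hx true))
        (ih hndpre (hb.restrict hx false) (Cube.mem_of_mem_restrictSet hDs hx false)) h

lemma qbfSat_of_restrict_weaklyForced_head {q : Quant} {pre : QPrefix} {ψ : Cnf} {b : Lit}
    (hnd : (((q, b.1) :: pre).map Prod.snd).Nodup) (hb : WeaklyForced ((q, b.1) :: pre) ψ b)
    (h : qbfSat pre (Cnf.restrict ψ {b})) : qbfSat ((q, b.1) :: pre) ψ := by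
  rw [qbfSat_cons_lit]
  rcases hb with ⟨hq, -⟩ | ⟨hq, hpure⟩
  · obtain rfl := QPrefix.quant_eq_of_mem_cons hnd hq
    exact Or.inl h
  · obtain rfl := QPrefix.quant_eq_of_mem_cons hnd hq
    exact ⟨h, qbfSat_of_subset (Cnf.restrict_negate_subset hpure) h⟩

lemma qbfSat_of_restrict_weaklyForced {b : Lit} {pre : QPrefix} {ψ : Cnf}
    (hnd : (pre.map Prod.snd).Nodup) (hb : WeaklyForced pre ψ b)
    (h : qbfSat (QPrefix.restrict pre {b}) (Cnf.restrict ψ {b})) : qbfSat pre ψ := by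
  induction pre generalizing ψ with
  | nil => exact absurd hb WeaklyForced.not_nil
  | cons head pre ih =>
    obtain ⟨q, x⟩ := head
    by_cases hx : b.1 = x
    · subst hx
      rw [QPrefix.restrict_cons_self hnd] at h
      exact qbfSat_of_restrict_weaklyForced_head hnd hb h
    · have hndpre : (pre.map Prod.snd).Nodup := (List.nodup_cons.1 hnd).2
      rw [QPrefix.restrict_cons_of_ne hx, qbfSat_cons, Cnf.restrict_comm hx,
        Cnf.restrict_comm hx] at h
      rw [qbfSat_cons]
      exact q.combine_mono (ih hndpre (hb.restrict hx true)) (ih hndpre (hb.restrict hx false)) h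

def CubeRedundant (pre : QPrefix) (ψ : Cnf) (E : Cube) : Prop :=
  qbfSatCubes pre ψ {E} → qbfSat pre ψ

lemma CubeRedundant.of_decision {q : Quant} {pre : QPrefix} {ψ : Cnf} {E : Cube} {a : Lit}
    (haE : a ∈ E) (hnaE : a.negate ∉ E)
    (h : CubeRedundant pre (Cnf.restrict ψ {a}) (E.erase a)) :
    CubeRedundant ((q, a.1) :: pre) ψ E := by
  intro hE
  rw [qbfSatCubes_cons_lit, Cube.restrictSet_singleton hnaE,
    Cube.restrictSet_negate_eq_empty (by simpa using haE), qbfSatCubes_emptyset] at hE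
  rw [qbfSat_cons_lit]
  exact q.combine_mono h id hE

lemma CubeRedundant.of_weaklyForced {pre : QPrefix} {ψ : Cnf} {E : Cube} {b : Lit}
    (hnd : (pre.map Prod.snd).Nodup) (hb : WeaklyForced pre ψ b) (hbE : b ∈ E)
    (hnbE : b.negate ∉ E)
    (h : CubeRedundant (QPrefix.restrict pre {b}) (Cnf.restrict ψ {b}) (E.erase b)) :
    CubeRedundant pre ψ E := by
  intro hE
  have := qbfSatCubes_restrict_of_weaklyForced hnd hb (by simpa using hbE) hE
  rw [Cube.restrictSet_singleton hnbE] at this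
  exact qbfSat_of_restrict_weaklyForced hnd hb (h this)

lemma PropChain.cons_iff {pre : QPrefix} {ψ : Cnf} {A0 : Assignment} {l : Lit} {ls : List Lit} :
    PropChain pre ψ A0 (l :: ls) ↔
      PropChain pre ψ A0 ls ∧ Forced pre (Cnf.restrict ψ (A0 ∪ ls.toFinset)) l := by
  constructor
  · rintro (_ | ⟨h, hunit⟩ | ⟨h, hpure, hq⟩ | ⟨h, hpure, hq⟩)
    · exact ⟨h, Or.inl hunit⟩
    · exact ⟨h, Or.inr (Or.inl ⟨hpure, hq⟩)⟩
    · exact ⟨h, Or.inr (Or.inr ⟨by simpa using hpure, hq⟩)⟩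
  · rintro ⟨h, hunit | ⟨hpure, hq⟩ | ⟨hpure, hq⟩⟩
    · exact .unit h hunit
    · exact .pureEx h hpure hq
    · simpa using PropChain.pureAll h hpure hq

lemma PropChain.append_singleton {pre : QPrefix} {ψ : Cnf} {A0 : Assignment} {b : Lit} :
    ∀ {ls : List Lit}, PropChain pre ψ A0 (ls ++ [b]) →
      Forced pre (Cnf.restrict ψ A0) b ∧ PropChain pre ψ (insert b A0) ls
  | [], h => ⟨by simpa using (PropChain.cons_iff.1 h).2, .nil⟩
  | l :: ls, h => by
    obtain ⟨h, hl⟩ := PropChain.cons_iff.1 h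
    obtain ⟨hb, h⟩ := PropChain.append_singleton h
    refine ⟨hb, PropChain.cons_iff.2 ⟨h, ?_⟩⟩
    convert hl using 2
    ext
    simp

lemma CubeRedundant.of_propChain {pre : QPrefix} {ψ : Cnf} (hnd : (pre.map Prod.snd).Nodup)
    {ls : List Lit} {A0 : Assignment} (hchain : PropChain pre ψ A0 ls)
    (hcons : (A0 ∪ ls.toFinset).consistent)
    (hsat : qbfSat (QPrefix.restrict pre (A0 ∪ ls.toFinset))
      (Cnf.restrict ψ (A0 ∪ ls.toFinset))) :
    CubeRedundant (QPrefix.restrict pre A0) (Cnf.restrict ψ A0) (ls.toFinset \ A0) := by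
  induction ls using List.reverseRecOn generalizing A0 with
  | nil => exact fun _ => by simpa using hsat
  | append_singleton ls b ih =>
    obtain ⟨hb, hchain⟩ := hchain.append_singleton
    have hset : A0 ∪ (ls ++ [b]).toFinset = insert b A0 ∪ ls.toFinset := by
      ext
      simp
    have hbA0 : b ∉ A0 := fun h => hb.fst_ne h rfl
    have hnbA0 : b.negate ∉ A0 := fun h => hb.fst_ne h rfl
    have hnb : b.negate ∉ A0 ∪ (ls ++ [b]).toFinset := hcons b (by simp)
    have hstrip := ih hchain (by rwa [← hset]) (by rwa [← hset])
    rw [Finset.insert_eq, ← QPrefix.restrict_restrict,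
      ← Cnf.restrict_restrict (by simpa using hnbA0)] at hstrip
    have hdiff : ((ls ++ [b]).toFinset \ A0).erase b = ls.toFinset \ ({b} ∪ A0) := by
      ext
      simp
      tauto
    refine .of_weaklyForced (QPrefix.nodup_restrict hnd A0) hb.weaklyForced_restrict
      (by simp [hbA0]) (fun h => hnb (Finset.mem_union_right _ (Finset.sdiff_subset h))) ?_
    rwa [hdiff]

lemma Assignment.image_fst_erase {A : Assignment} {a : Lit} (hA : A.consistent) (ha : a ∈ A) :
    (A.erase a).image Prod.fst = (A.image Prod.fst).erase a.1 := by
  ext v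
  simp only [Finset.mem_image, Finset.mem_erase]
  constructor
  · rintro ⟨l, ⟨hla, hl⟩, rfl⟩
    refine ⟨fun hv => ?_, l, hl, rfl⟩
    rcases Lit.eq_or_eq_negate_of_fst_eq hv with rfl | rfl
    exacts [hla rfl, hA a ha hl]
  · rintro ⟨hv, l, hl, rfl⟩
    exact ⟨l, ⟨by rintro rfl; exact hv rfl, hl⟩, rfl⟩

lemma CubeRedundant.of_decisions {pre : QPrefix} {k : ℕ} {ψ : Cnf} {A0 E : Assignment}
    (hnd : (pre.map Prod.snd).Nodup)
    (hk : A0.image Prod.fst = ((pre.take k).map Prod.snd).toFinset) (hA0E : A0 ⊆ E)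
    (hE : E.consistent)
    (h : CubeRedundant (QPrefix.restrict pre A0) (Cnf.restrict ψ A0) (E \ A0)) :
    CubeRedundant pre ψ E := by
  induction pre generalizing k ψ A0 E with
  | nil =>
    obtain rfl : A0 = ∅ := by simpa using hk
    simpa using h
  | cons head pre ih =>
    obtain ⟨q, x⟩ := head
    cases k with
    | zero =>
      obtain rfl : A0 = ∅ := by simpa using hk
      simpa using h
    | succ k =>
      rw [List.take_succ_cons, List.map_cons, List.toFinset_cons] at hk
      obtain ⟨a, haA0, rfl⟩ : ∃ a : Lit, a ∈ A0 ∧ a.1 = x :=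
        Finset.mem_image.1 (hk ▸ Finset.mem_insert_self x _)
      have hA0 : A0.consistent := hE.mono hA0E
      have hnaA0 : a.negate ∉ A0 := hA0 a haA0
      have hk' : (A0.erase a).image Prod.fst = ((pre.take k).map Prod.snd).toFinset := by
        rw [Assignment.image_fst_erase hA0 haA0, hk, Finset.erase_insert]
        intro hx
        obtain ⟨r, hr, hrx⟩ := List.mem_map.1 (List.mem_toFinset.1 hx)
        exact (List.nodup_cons.1 hnd).1 (List.mem_map.2 ⟨r, List.mem_of_mem_take hr, hrx⟩)
      have hsplit : A0 = A0.erase a ∪ {a} := by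
        rw [Finset.union_comm, ← Finset.insert_eq, Finset.insert_erase haA0]
      have hpre : QPrefix.restrict ((q, a.1) :: pre) A0 = QPrefix.restrict pre (A0.erase a) := by
        conv_lhs => rw [hsplit, ← QPrefix.restrict_restrict, QPrefix.restrict_cons_self hnd]
      have hψ : Cnf.restrict ψ A0 = Cnf.restrict (Cnf.restrict ψ {a}) (A0.erase a) := by
        conv_lhs => rw [hsplit]
        refine (Cnf.restrict_restrict fun l hl hla => hnaA0 ?_).symm
        rw [Finset.mem_singleton, Lit.negate_eq_iff] at hla
        exact hla ▸ Finset.mem_of_mem_erase hl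
      have hdiff : E.erase a \ A0.erase a = E \ A0 := by
        ext l
        by_cases hl : l = a <;> simp [hl, haA0]
      refine .of_decision (hA0E haA0) (hE a (hA0E haA0)) (ih (List.nodup_cons.1 hnd).2 hk'
        (Finset.erase_subset_erase a hA0E) (hE.mono (Finset.erase_subset a E)) ?_)
      rwa [← hψ, ← hpre, hdiff]

/-- Generalized model generation: if `A` is a QCDCL assignment and the QBF
`φ[A]` is satisfiable, then adding the cube `C = ⋀_{l ∈ A} l` disjunctively to
the matrix preserves satisfiability. -/
theorem generalized_model_generation
    (pre : QPrefix) (ψ : Cnf) (A : Assignment)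
    (hnodup : (pre.map Prod.snd).Nodup)
    (hA : QCDCLAssignment pre ψ A)
    (hsat : qbfSat (QPrefix.restrict pre A) (Cnf.restrict ψ A)) :
    qbfSat pre ψ ↔ qbfSatCubes pre ψ {A} := by
  obtain ⟨hcons, A0, ls, k, rfl, hk, hchain⟩ := hA
  refine ⟨qbfSatCubes_of_qbfSat,
    CubeRedundant.of_decisions hnodup hk Finset.subset_union_left hcons ?_⟩
  rw [Finset.union_sdiff_left]
  exact CubeRedundant.of_propChain hnodup hchain hcons hsat
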